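/- Let u be a real-analytic solution of the heat equation 4 u_t = u_{xx} in a domain D of the (x,t)-plane. If u is not identically zero, then the points (x₀,t₀) ∈ D at which x ↦ u(x,t₀) has a zero of multiplicity ≥ 2 (i.e., u(x₀,t₀) = 0 and u_x(x₀,t₀) = 0) cannot form a real-analytic curve x = g(t) along which the multiplicity of the zero of x ↦ u(x,t) is a constant m ≥ 2. More precisely: if u(x,t) = (x-g(t))^m v(x,t) near (g(t₀),t₀) with m ≥ 2, g real-analytic, v real-analytic, and v(g(t₀),t₀) ≠ 0, then u cannot satisfy the heat equation. -/

import Mathlib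

/-!
Restrict to the time slice `t = t₀` and write `a = g t₀`, `V x = v x t₀`. Off the curve, the
heat equation divided by `(x - a) ^ (m - 2)` reads `m (m - 1) V x = (x - a) G x`, where `G`
collects the remaining terms of `4 u_t` and `u_xx` and is continuous at `a` because `v` and `g`
are smooth. Letting `x → a` gives `m (m - 1) V a = 0`, contradicting `V a ≠ 0`.
-/

open Filter Topology

section OneVariable

variable {𝕜 : Type*} [NontriviallyNormedField 𝕜]

theorem eq_zero_of_eventually_eq_sub_smul {E : Type*} [NormedAddCommGroup E] [NormedSpace 𝕜 E]
    {F G : 𝕜 → E} {a : 𝕜} (hF : ContinuousAt F a) (hG : ContinuousAt G a)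
    (h : ∀ᶠ x in 𝓝[≠] a, F x = (x - a) • G x) : F a = 0 := by
  have hlim : Tendsto (fun x => (x - a) • G x) (𝓝[≠] a) (𝓝 ((a - a) • G a)) :=
    (((continuousAt_id.sub continuousAt_const).smul hG).mono_left nhdsWithin_le_nhds)
  rw [sub_self, zero_smul] at hlim
  exact tendsto_nhds_unique ((hF.mono_left nhdsWithin_le_nhds).congr' h) hlim

theorem HasDerivAt.pow_succ_mul {h w : 𝕜 → 𝕜} {h' w' t : 𝕜} (n : ℕ) (hh : HasDerivAt h h' t)
    (hw : HasDerivAt w w' t) :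
    HasDerivAt (fun s => h s ^ (n + 1) * w s) (h t ^ n * ((n + 1) * h' * w t + h t * w')) t := by
  refine ((hh.fun_pow (n + 1)).mul hw).congr_deriv ?_
  rw [Nat.add_sub_cancel, pow_succ]
  push_cast
  ring

theorem deriv_deriv_sub_pow_mul {V : 𝕜 → 𝕜} {a x : 𝕜} (n : ℕ)
    (hV : ∀ᶠ y in 𝓝 x, DifferentiableAt 𝕜 V y) (hV' : DifferentiableAt 𝕜 (deriv V) x) :
    deriv (deriv fun y => (y - a) ^ (n + 2) * V y) x =
      (x - a) ^ n * ((n + 2) * (n + 1) * V x +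
        (x - a) * (2 * (n + 2) * deriv V x + (x - a) * deriv (deriv V) x)) := by
  have hsub (y : 𝕜) : HasDerivAt (fun y => y - a) 1 y := (hasDerivAt_id y).sub_const a
  have hfirst : deriv (fun y => (y - a) ^ (n + 2) * V y) =ᶠ[𝓝 x]
      fun y => (y - a) ^ (n + 1) * ((n + 2) * V y + (y - a) * deriv V y) := by
    filter_upwards [hV] with y hy
    rw [((hsub y).pow_succ_mul (n + 1) hy.hasDerivAt).deriv]
    push_cast
    ring
  have hW : HasDerivAt (fun y => (n + 2) * V y + (y - a) * deriv V y)
      ((n + 2) * deriv V x + (1 * deriv V x + (x - a) * deriv (deriv V) x)) x :=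
    (hV.self_of_nhds.hasDerivAt.const_mul _).add ((hsub x).mul hV'.hasDerivAt)
  rw [hfirst.deriv_eq, ((hsub x).pow_succ_mul n hW).deriv]
  ring

end OneVariable

theorem AnalyticAt.continuousAt_deriv_snd {𝕜 E : Type*} [NontriviallyNormedField 𝕜]
    [NormedAddCommGroup E] [NormedSpace 𝕜 E] [CompleteSpace E] {v : 𝕜 → 𝕜 → E} {x t : 𝕜}
    (hv : AnalyticAt 𝕜 (fun p : 𝕜 × 𝕜 => v p.1 p.2) (x, t)) :
    ContinuousAt (fun y => deriv (v y) t) x := by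
  set f : 𝕜 × 𝕜 → E := fun p => v p.1 p.2
  have hslice : ContinuousAt (fun y => (y, t)) x :=
    (continuous_id.prodMk continuous_const).continuousAt
  have heq : (fun y => fderiv 𝕜 f (y, t) (0, 1)) =ᶠ[𝓝 x] fun y => deriv (v y) t := by
    filter_upwards [hslice.tendsto.eventually hv.eventually_analyticAt] with y hy
    exact (hy.differentiableAt.hasFDerivAt.comp_hasDerivAt t
      ((hasDerivAt_const t y).prodMk (hasDerivAt_id t))).deriv.symm
  refine ContinuousAt.congr ?_ heq
  exact ((ContinuousLinearMap.apply 𝕜 E ((0 : 𝕜), (1 : 𝕜))).continuous.continuousAt.comp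
    (hv.fderiv.continuousAt.comp (f := fun y => (y, t)) hslice))

theorem sub_pow_mul_heat_identity {u v : ℝ → ℝ → ℝ} {g : ℝ → ℝ} {n : ℕ} {x t : ℝ}
    (hg : DifferentiableAt ℝ g t) (hv : AnalyticAt ℝ (fun p : ℝ × ℝ => v p.1 p.2) (x, t))
    (hfact : ∀ᶠ p : ℝ × ℝ in 𝓝 (x, t), u p.1 p.2 = (p.1 - g p.2) ^ (n + 2) * v p.1 p.2)
    (heat : 4 * deriv (fun s => u x s) t = deriv (deriv fun y => u y t) x) (hx : x ≠ g t) :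
    ((n : ℝ) + 2) * (n + 1) * v x t =
      (x - g t) * (4 * ((x - g t) * deriv (v x) t - (n + 2) * deriv g t * v x t) -
        (2 * (n + 2) * deriv (fun y => v y t) x + (x - g t) * deriv (deriv fun y => v y t) x)) := by
  have hV : AnalyticAt ℝ (fun y => v y t) x := hv.curry_left
  have hu_t : (fun s => u x s) =ᶠ[𝓝 t] fun s => (x - g s) ^ (n + 2) * v x s :=
    ((continuous_const.prodMk continuous_id).continuousAt.tendsto.eventually hfact :)
  have hu_x : (fun y => u y t) =ᶠ[𝓝 x] fun y => (y - g t) ^ (n + 2) * v y t :=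
    ((continuous_id.prodMk continuous_const).continuousAt.tendsto.eventually hfact :)
  have hderiv_t : deriv (fun s => u x s) t =
      (x - g t) ^ (n + 1) * ((x - g t) * deriv (v x) t - (n + 2) * deriv g t * v x t) := by
    rw [hu_t.deriv_eq, ((hg.hasDerivAt.const_sub x).pow_succ_mul (n + 1)
      hv.curry_right.differentiableAt.hasDerivAt).deriv]
    push_cast
    ring
  rw [hderiv_t, hu_x.deriv.deriv_eq, deriv_deriv_sub_pow_mul n
    (hV.eventually_analyticAt.mono fun y hy => hy.differentiableAt)
    hV.deriv.differentiableAt] at heat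
  apply mul_left_cancel₀ (pow_ne_zero n (sub_ne_zero.mpr hx))
  linear_combination -heat

/-- A temperature cannot have a non-isolated zero of constant multiplicity
`m ≥ 2` along a real-analytic curve: if `u(x,t) = (x-g(t))^m v(x,t)` near
`(g(t₀), t₀)` with `v(g(t₀),t₀) ≠ 0`, then `u` cannot satisfy the heat
equation `4 u_t = u_{xx}` near that point. -/
theorem no_multiple_zero_curve_for_temperature
    (u v : ℝ → ℝ → ℝ) (g : ℝ → ℝ) (m : ℕ) (hm : 2 ≤ m) (t₀ : ℝ)
    (hg : AnalyticAt ℝ g t₀)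
    (hv : AnalyticAt ℝ (fun p : ℝ × ℝ => v p.1 p.2) (g t₀, t₀))
    (hvne : v (g t₀) t₀ ≠ 0)
    (hfact : ∀ᶠ p : ℝ × ℝ in nhds (g t₀, t₀),
      u p.1 p.2 = (p.1 - g p.2) ^ m * v p.1 p.2) :
    ¬ (∀ᶠ p : ℝ × ℝ in nhds (g t₀, t₀),
        4 * deriv (fun t => u p.1 t) p.2 = deriv (deriv (fun x => u x p.2)) p.1) := by
  intro hheat
  obtain ⟨n, rfl⟩ := Nat.exists_eq_add_of_le' hm
  have hslice : Tendsto (fun x => (x, t₀)) (𝓝 (g t₀)) (𝓝 (g t₀, t₀)) :=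
    (continuous_id.prodMk continuous_const).continuousAt
  have hidentity : ∀ᶠ x in 𝓝[≠] g t₀, ((n : ℝ) + 2) * (n + 1) * v x t₀ =
      (x - g t₀) • (4 * ((x - g t₀) * deriv (v x) t₀ - (n + 2) * deriv g t₀ * v x t₀) -
        (2 * (n + 2) * deriv (fun y => v y t₀) x +
          (x - g t₀) * deriv (deriv fun y => v y t₀) x)) := by
    filter_upwards [nhdsWithin_le_nhds (hslice.eventually
      (hv.eventually_analyticAt.and (hfact.eventually_nhds.and hheat))), self_mem_nhdsWithin]
      with x ⟨hvx, hfx, hheatx⟩ hx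
    exact sub_pow_mul_heat_identity hg.differentiableAt hvx hfx hheatx hx
  have hV : AnalyticAt ℝ (fun x => v x t₀) (g t₀) := hv.curry_left
  have hV₀ := hV.continuousAt
  have hV₁ := hV.deriv.continuousAt
  have hV₂ := hV.deriv.deriv.continuousAt
  have hv_t := hv.continuousAt_deriv_snd
  have hzero := eq_zero_of_eventually_eq_sub_smul (by fun_prop) (by fun_prop) hidentity
  exact hvne ((mul_eq_zero.mp hzero).resolve_left (by positivity))
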